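/- arXiv:2407.18620 — 4 statements merged into one kernel-verified Lean document; each statement's English description precedes it below -/
import Mathlib

section
/- Let w be a word over a linearly ordered alphabet, and let m be the maximum length of any plateau-rollercoaster occurring as a subsequence of w. If s and s' are plateau-rollercoasters of length m embedded in w via index sequences i_1 < i_2 < ... < i_m and j_1 < j_2 < ... < j_m respectively (i.e., s = w[i_1]...w[i_m] and s' = w[j_1]...w[j_m]), then either s ≠ s' as words, or the two index sequences are identical. -/
namespace RollerCoaster

abbrev Word := List ℕ

def weakIncr (u : Word) : Prop := u.Chain' (· ≤ ·)

def weakDecr (u : Word) : Prop := u.Chain' (· ≥ ·)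

def plateauRun (u : Word) : Prop := weakIncr u ∨ weakDecr u

/-- The factor `w[i..j]` (0-indexed, inclusive). -/
def factorAt (w : Word) (i j : ℕ) : Word := (w.drop i).take (j + 1 - i)

/-- `w[i..j]` is a maximal plateau-run: weakly monotone and not extendable
to a weakly monotone factor in either direction. -/
def maxRunAt (w : Word) (i j : ℕ) : Prop :=
  i ≤ j ∧ j < w.length ∧ plateauRun (factorAt w i j) ∧
  (i = 0 ∨ ¬ plateauRun (factorAt w (i - 1) j)) ∧
  (j + 1 = w.length ∨ ¬ plateauRun (factorAt w i (j + 1)))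

/-- Number of distinct letters of a word. -/
def distinctCount (u : Word) : ℕ := u.dedup.length

/-- `w` is a plateau-`k`-rollercoaster: every maximal plateau-run contains
at least `k` distinct letters. -/
def IsPlateauRC (k : ℕ) (w : Word) : Prop :=
  ∀ i j, maxRunAt w i j → k ≤ distinctCount (factorAt w i j)

def subseqAt (w : Word) (idx : List ℕ) : Word := idx.map (fun t => w.getD t 0)

def embeds (w : Word) (idx : List ℕ) : Prop :=
  idx.Pairwise (· < ·) ∧ ∀ t ∈ idx, t < w.length

/-- `w` is a plateau-`(k,h)_ξ`-rollercoaster (`ξ = ↑` iff `up = true`):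
the last (possibly incomplete) run has orientation `ξ` and exactly `h`
distinct letters if `h < k` (at least `k` if `h = k`), and every other
maximal run is a plateau-`k`-run. -/
def IsPRCkh (k h : ℕ) (up : Bool) (w : Word) : Prop :=
  w ≠ [] ∧
  ∃ i, i < w.length ∧
    (if up then
        weakIncr (factorAt w i (w.length - 1)) ∧
          (i = 0 ∨ ¬ weakIncr (factorAt w (i - 1) (w.length - 1)))
      else
        weakDecr (factorAt w i (w.length - 1)) ∧
          (i = 0 ∨ ¬ weakDecr (factorAt w (i - 1) (w.length - 1)))) ∧
    (if h < k then distinctCount (factorAt w i (w.length - 1)) = h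
      else k ≤ distinctCount (factorAt w i (w.length - 1))) ∧
    ∀ i' j', maxRunAt w i' j' →
      (i' = i ∧ j' = w.length - 1) ∨ k ≤ distinctCount (factorAt w i' j')

def upEdge (w : Word) (i j : ℕ) : Prop :=
  i < j ∧ j < w.length ∧ w.getD i 0 < w.getD j 0 ∧
  ∀ j', i < j' → j' < j → ¬ (w.getD i 0 ≤ w.getD j' 0 ∧ w.getD j' 0 ≤ w.getD j 0)

def eqEdge (w : Word) (i j : ℕ) : Prop :=
  i < j ∧ j < w.length ∧ w.getD i 0 = w.getD j 0 ∧
  ∀ j', i < j' → j' < j → w.getD j' 0 ≠ w.getD j 0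

def downEdge (w : Word) (i j : ℕ) : Prop :=
  i < j ∧ j < w.length ∧ w.getD j 0 < w.getD i 0 ∧
  ∀ j', i < j' → j' < j → ¬ (w.getD j 0 ≤ w.getD j' 0 ∧ w.getD j' 0 ≤ w.getD i 0)

def negEdge (w : Word) (i j : ℕ) : Prop :=
  upEdge w i j ∨ eqEdge w i j ∨ downEdge w i j

/-!
If two different index sequences spell the same word `s`, pick a position `t` where they
differ, say `I[t] < J[t]`. Then `I[0..t] ++ J[t..]` is again increasing and spells `s` with
its `t`-th letter repeated. Repeating a letter only lengthens the plateau-run through it, so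
the maximal runs of the new word correspond to those of `s` and carry the same letters; the
new word is a plateau-`k`-rollercoaster of length `m + 1`, contradicting maximality.
-/

section Factor

variable {w : Word} {i j : ℕ}

lemma getElem_factorAt {p : ℕ} (hp : p < (factorAt w i j).length) :
    (factorAt w i j)[p] = w.getD (i + p) 0 := by
  simp only [factorAt, List.length_take, List.length_drop, List.getElem_take,
    List.getElem_drop] at hp ⊢
  rw [List.getD_eq_getElem _ _ (by omega)]

lemma length_factorAt (hj : j < w.length) : (factorAt w i j).length = j + 1 - i := by
  simp only [factorAt, List.length_take, List.length_drop]
  omega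

lemma isChain_factorAt_iff {R : ℕ → ℕ → Prop} (hj : j < w.length) :
    (factorAt w i j).IsChain R ↔ ∀ a, i ≤ a → a < j → R (w.getD a 0) (w.getD (a + 1) 0) := by
  simp only [List.isChain_iff_getElem, getElem_factorAt, length_factorAt hj]
  refine ⟨fun h a hia haj => ?_, fun h p hp => ?_⟩
  · simpa [Nat.add_sub_cancel' hia, ← add_assoc] using h (a - i) (by omega)
  · simpa [← add_assoc] using h (i + p) (by omega) (by omega)

lemma mem_factorAt_iff (hj : j < w.length) {x : ℕ} :
    x ∈ factorAt w i j ↔ ∃ a, i ≤ a ∧ a ≤ j ∧ w.getD a 0 = x := by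
  simp only [List.mem_iff_getElem, getElem_factorAt, length_factorAt hj]
  refine ⟨fun ⟨p, hp, hx⟩ => ⟨i + p, by omega, by omega, hx⟩, fun ⟨a, hia, haj, hx⟩ => ?_⟩
  exact ⟨a - i, by omega, by rwa [Nat.add_sub_cancel' hia]⟩

lemma plateauRun_factorAt_iff (hj : j < w.length) :
    plateauRun (factorAt w i j) ↔
      (∀ a, i ≤ a → a < j → w.getD a 0 ≤ w.getD (a + 1) 0) ∨
        ∀ a, i ≤ a → a < j → w.getD a 0 ≥ w.getD (a + 1) 0 :=
  Iff.or (isChain_factorAt_iff hj) (isChain_factorAt_iff hj)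

lemma plateauRun_factorAt_of_le {a b : ℕ} (hj : j < w.length) (h : plateauRun (factorAt w i j))
    (ha : i ≤ a) (hb : b ≤ j) : plateauRun (factorAt w a b) := by
  rw [plateauRun_factorAt_iff hj] at h
  rw [plateauRun_factorAt_iff (lt_of_le_of_lt hb hj)]
  exact h.imp (fun h c hc hcb => h c (by omega) (by omega))
    (fun h c hc hcb => h c (by omega) (by omega))

end Factor

section Stutter

variable {s : Word} {t i j : ℕ}

def stutter (s : Word) (t : ℕ) : Word := s.take (t + 1) ++ s.drop t

def stutterIdx (t p : ℕ) : ℕ := if p ≤ t then p else p - 1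

lemma length_stutter (ht : t < s.length) : (stutter s t).length = s.length + 1 := by
  simp only [stutter, List.length_append, List.length_take, List.length_drop]
  omega

lemma getD_stutter (ht : t < s.length) (p : ℕ) :
    (stutter s t).getD p 0 = s.getD (stutterIdx t p) 0 := by
  unfold stutter stutterIdx
  split_ifs with hp
  · rw [List.getD_append _ _ _ _ (by simp only [List.length_take]; omega)]
    simp [Nat.lt_succ_of_le hp]
  · rw [List.getD_append_right _ _ _ _ (by simp only [List.length_take]; omega)]
    simp only [List.getD_eq_getElem?_getD, List.getElem?_drop, List.length_take]
    congr 3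
    omega

lemma isChain_factorAt_stutter_iff {R : ℕ → ℕ → Prop} (hR : ∀ x, R x x) (ht : t < s.length)
    (hj : j ≤ s.length) :
    (factorAt (stutter s t) i j).IsChain R ↔
      (factorAt s (stutterIdx t i) (stutterIdx t j)).IsChain R := by
  rw [isChain_factorAt_iff (by rw [length_stutter ht]; omega),
    isChain_factorAt_iff (by grind [stutterIdx])]
  simp only [getD_stutter ht]
  constructor
  · intro h b hib hbj
    -- the pair `(b, b + 1)` of `s` sits at positions `(b, b + 1)` before `t`, one later after it
    obtain ⟨a, hia, haj, hab, hab1⟩ : ∃ a, i ≤ a ∧ a < j ∧ stutterIdx t a = b ∧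
        stutterIdx t (a + 1) = b + 1 := by
      by_cases hbt : b < t
      exacts [⟨b, by grind [stutterIdx]⟩, ⟨b + 1, by grind [stutterIdx]⟩]
    simpa [hab, hab1] using h a hia haj
  · intro h a hia haj
    by_cases hat : a = t
    · rw [show stutterIdx t (a + 1) = stutterIdx t a by grind [stutterIdx]]
      exact hR _
    · rw [show stutterIdx t (a + 1) = stutterIdx t a + 1 by grind [stutterIdx]]
      exact h _ (by grind [stutterIdx]) (by grind [stutterIdx])

lemma plateauRun_factorAt_stutter_iff (ht : t < s.length) (hj : j ≤ s.length) :
    plateauRun (factorAt (stutter s t) i j) ↔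
      plateauRun (factorAt s (stutterIdx t i) (stutterIdx t j)) :=
  Iff.or (isChain_factorAt_stutter_iff le_refl ht hj)
    (isChain_factorAt_stutter_iff (R := (· ≥ ·)) le_refl ht hj)

lemma maxRunAt_stutter (ht : t < s.length) (h : maxRunAt (stutter s t) i j) :
    maxRunAt s (stutterIdx t i) (stutterIdx t j) := by
  obtain ⟨hij, hj, hrun, hleft, hright⟩ := h
  rw [length_stutter ht] at hj hright
  have hj' : stutterIdx t j < s.length := by grind [stutterIdx]
  refine ⟨by grind [stutterIdx], hj',
    (plateauRun_factorAt_stutter_iff ht (by omega)).mp hrun, ?_, ?_⟩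
  · refine or_iff_not_imp_left.mpr fun hi hext => ?_
    rcases hleft with rfl | hleft
    · exact hi (by simp [stutterIdx])
    refine hleft ((plateauRun_factorAt_stutter_iff ht (by omega)).mpr ?_)
    exact plateauRun_factorAt_of_le hj' hext (by grind [stutterIdx]) le_rfl
  · refine or_iff_not_imp_left.mpr fun hlast hext => ?_
    have hj1 : stutterIdx t j + 1 < s.length := by omega
    rcases hright with hright | hright
    · exact hlast (by grind [stutterIdx])
    refine hright ((plateauRun_factorAt_stutter_iff ht (by grind [stutterIdx])).mpr ?_)
    exact plateauRun_factorAt_of_le hj1 hext le_rfl (by grind [stutterIdx])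

lemma distinctCount_factorAt_le_stutter (ht : t < s.length) (hij : i ≤ j)
    (hj : j ≤ s.length) :
    distinctCount (factorAt s (stutterIdx t i) (stutterIdx t j)) ≤
      distinctCount (factorAt (stutter s t) i j) := by
  classical
  rw [distinctCount, distinctCount, ← List.card_toFinset, ← List.card_toFinset]
  refine Finset.card_le_card fun x hx => ?_
  rw [List.mem_toFinset, mem_factorAt_iff (by grind [stutterIdx])] at hx
  rw [List.mem_toFinset, mem_factorAt_iff (by rw [length_stutter ht]; omega)]
  obtain ⟨b, hib, hbj, rfl⟩ := hx
  obtain ⟨a, hia, haj, rfl⟩ : ∃ a, i ≤ a ∧ a ≤ j ∧ stutterIdx t a = b := by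
    by_cases hb : b < t ∨ b = t ∧ i ≤ t
    · exact ⟨b, by grind [stutterIdx]⟩
    · exact ⟨b + 1, by grind [stutterIdx]⟩
  exact ⟨a, hia, haj, getD_stutter ht a⟩

lemma isPlateauRC_stutter {k : ℕ} (h : IsPlateauRC k s) (ht : t < s.length) :
    IsPlateauRC k (stutter s t) := fun i j hrun =>
  have hj : j ≤ s.length := by have := hrun.2.1; rw [length_stutter ht] at this; omega
  (h _ _ (maxRunAt_stutter ht hrun)).trans (distinctCount_factorAt_le_stutter ht hrun.1 hj)

end Stutter

section Embedding

variable {w : Word} {I J : List ℕ}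

lemma subseqAt_sublist {idx : List ℕ} (h : embeds w idx) : (subseqAt w idx).Sublist w := by
  obtain ⟨hsorted, hlt⟩ := h
  convert List.map_getElem_sublist (l := w)
    (List.pairwise_pmap (f := Fin.mk) hlt |>.mpr (hsorted.imp fun h _ _ => h)) using 1
  simp only [subseqAt, List.map_pmap]
  refine List.ext_getElem (by simp) fun n _ _ => ?_
  simp [List.getElem?_eq_getElem (hlt _ (List.getElem_mem _))]

lemma embeds_splice {t : ℕ} (hI : embeds w I) (hJ : embeds w J) (htI : t < I.length)
    (htJ : t < J.length) (hlt : I[t] < J[t]) : embeds w (I.take (t + 1) ++ J.drop t) := by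
  have hIt : ∀ a ∈ I.take (t + 1), a ≤ I[t] := by
    intro a ha
    obtain ⟨p, hp, rfl⟩ := List.mem_take_iff_getElem.mp ha
    exact hI.1.sortedLT.strictMono_get.monotone
      (show (⟨p, by omega⟩ : Fin I.length) ≤ ⟨t, htI⟩ from Fin.mk_le_mk.mpr (by omega))
  have hJt : ∀ b ∈ J.drop t, J[t] ≤ b := by
    intro b hb
    obtain ⟨p, hp, rfl⟩ := List.mem_drop_iff_getElem.mp hb
    exact hJ.1.sortedLT.strictMono_get.monotone
      (show (⟨t, htJ⟩ : Fin J.length) ≤ ⟨t + p, by omega⟩ from Fin.mk_le_mk.mpr (by omega))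
  refine ⟨List.pairwise_append.mpr ⟨hI.1.sublist (List.take_sublist _ _),
    hJ.1.sublist (List.drop_sublist _ _), fun a ha b hb => ?_⟩, fun a ha => ?_⟩
  · exact (hIt a ha).trans_lt (hlt.trans_le (hJt b hb))
  · rcases List.mem_append.mp ha with ha | ha
    · exact hI.2 a (List.mem_of_mem_take ha)
    · exact hJ.2 a (List.mem_of_mem_drop ha)

lemma subseqAt_splice {t : ℕ} (hw : subseqAt w I = subseqAt w J) :
    subseqAt w (I.take (t + 1) ++ J.drop t) = stutter (subseqAt w I) t := by
  rw [stutter]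
  nth_rw 2 [hw]
  simp only [subseqAt, List.map_append, List.map_take, List.map_drop]

lemma exists_stutter_of_subseqAt_eq (hI : embeds w I) (hJ : embeds w J)
    (hw : subseqAt w I = subseqAt w J) (hne : I ≠ J) :
    ∃ t < (subseqAt w I).length, ∃ idx, embeds w idx ∧
      subseqAt w idx = stutter (subseqAt w I) t := by
  have hlen : I.length = J.length := by simpa [subseqAt] using congrArg List.length hw
  obtain ⟨t, htI, htJ, hIJ⟩ : ∃ t, ∃ (htI : t < I.length) (htJ : t < J.length), I[t] ≠ J[t] := by
    by_contra! H
    exact hne (List.ext_getElem hlen H)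
  refine ⟨t, by simpa [subseqAt], ?_⟩
  rcases hIJ.lt_or_gt with hlt | hlt
  · exact ⟨_, embeds_splice hI hJ htI htJ hlt, subseqAt_splice hw⟩
  · exact ⟨_, embeds_splice hJ hI htJ htI hlt, by rw [subseqAt_splice hw.symm, hw]⟩

end Embedding

theorem stmt0_general (w : Word) (k m : ℕ)
    (hmax : ∀ s : Word, s.Sublist w → IsPlateauRC k s → s.length ≤ m)
    (I J : List ℕ) (hI : embeds w I) (hJ : embeds w J)
    (hIl : I.length = m)
    (hIrc : IsPlateauRC k (subseqAt w I)) :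
    subseqAt w I ≠ subseqAt w J ∨ I = J := by
  refine or_iff_not_imp_left.mpr fun hw => ?_
  by_contra hne
  obtain ⟨t, ht, idx, hidx, hspell⟩ := exists_stutter_of_subseqAt_eq hI hJ (not_not.mp hw) hne
  have hlong := hmax _ (subseqAt_sublist hidx) (hspell ▸ isPlateauRC_stutter hIrc ht)
  rw [hspell, length_stutter ht, subseqAt, List.length_map] at hlong
  omega

/-- Two embeddings of maximum-length plateau-k-rollercoasters
either spell different words or use identical index sequences. -/
theorem stmt0 (w : Word) (k m : ℕ) (hk : 3 ≤ k)
    (hmax : ∀ s : Word, s.Sublist w → IsPlateauRC k s → s.length ≤ m)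
    (hex : ∃ s : Word, s.Sublist w ∧ IsPlateauRC k s ∧ s.length = m)
    (I J : List ℕ) (hI : embeds w I) (hJ : embeds w J)
    (hIl : I.length = m) (hJl : J.length = m)
    (hIrc : IsPlateauRC k (subseqAt w I)) (hJrc : IsPlateauRC k (subseqAt w J)) :
    subseqAt w I ≠ subseqAt w J ∨ I = J :=
  stmt0_general w k m hmax I J hI hJ hIl hIrc

end RollerCoaster
end

section
/- For a word w over a linearly ordered alphabet and k ≥ 3: if w is a plateau-(k,1)_↑-rollercoaster (its decomposition into maximal runs ends with an increasing run containing exactly 1 distinct letter), then w is either a unary word (all letters equal) or also a plateau-(k,k)_↓-rollercoaster. -/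
namespace RollerCoaster

open List

/-! The last increasing run is constant. If it does not start the word, the letter before it is
strictly larger, so the suffix from that letter on is weakly decreasing but not weakly increasing.
The longest weakly decreasing suffix is then a maximal run other than the last increasing run, so it
has at least `k` letters, and it serves as the last run of the decreasing decomposition; the former
last run stops being maximal, since it extends to the left to a weakly decreasing factor. -/

lemma factorAt_length_sub_one (w : Word) (i : ℕ) :
    factorAt w i (w.length - 1) = w.drop i :=
  take_of_length_le (by simp only [length_drop]; omega)

lemma maxRunAt_length_sub_one_iff {w : Word} {i : ℕ} :
    maxRunAt w i (w.length - 1) ↔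
      i < w.length ∧ plateauRun (w.drop i) ∧ (i = 0 ∨ ¬ plateauRun (w.drop (i - 1))) := by
  simp only [maxRunAt, factorAt_length_sub_one]
  constructor
  · rintro ⟨hi, hn, hrun, hstart, -⟩
    exact ⟨by omega, hrun, hstart⟩
  · rintro ⟨hi, hrun, hstart⟩
    exact ⟨by omega, by omega, hrun, hstart, .inl (by omega)⟩

lemma eq_of_mem_of_distinctCount_eq_one {u : Word} (h : distinctCount u = 1) {x y : ℕ}
    (hx : x ∈ u) (hy : y ∈ u) : x = y := by
  obtain ⟨c, hc⟩ := length_eq_one_iff.mp h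
  have hx' := mem_dedup.mpr hx
  have hy' := mem_dedup.mpr hy
  rw [hc, mem_singleton] at hx' hy'
  rw [hx', hy']

lemma weakDecr_of_distinctCount_eq_one {u : Word} (h : distinctCount u = 1) : weakDecr u :=
  (pairwise_of_forall_mem_list fun _ hx _ hy =>
    (eq_of_mem_of_distinctCount_eq_one h hx hy).ge).isChain

lemma exists_maxRunAt_of_weakDecr_drop {w : Word} {j : ℕ} (hj : j < w.length)
    (hdecr : weakDecr (w.drop j)) (hincr : ¬ weakIncr (w.drop j)) :
    ∃ i ≤ j, maxRunAt w i (w.length - 1) ∧ weakDecr (w.drop i) ∧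
      (i = 0 ∨ ¬ weakDecr (w.drop (i - 1))) := by
  classical
  have hex : ∃ i, weakDecr (w.drop i) := ⟨j, hdecr⟩
  have hle : Nat.find hex ≤ j := Nat.find_min' hex hdecr
  have hstart : Nat.find hex = 0 ∨ ¬ weakDecr (w.drop (Nat.find hex - 1)) := by
    rcases Nat.eq_zero_or_pos (Nat.find hex) with h0 | hpos
    · exact .inl h0
    · exact .inr (Nat.find_min hex (by omega))
  refine ⟨Nat.find hex, hle, maxRunAt_length_sub_one_iff.mpr ⟨by omega, .inr (Nat.find_spec hex),
    hstart.imp_right fun hD hrun => ?_⟩, Nat.find_spec hex, hstart⟩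
  rcases hrun with hI | hD'
  · exact hincr (hI.suffix (drop_suffix_drop_left w (by omega)))
  · exact hD hD'

theorem stmt3_general (w : Word) (k : ℕ) (hk : 3 ≤ k)
    (h : IsPRCkh k 1 true w) :
    (∀ a ∈ w, ∀ b ∈ w, a = b) ∨ IsPRCkh k k false w := by
  obtain ⟨hne, i, hi, ⟨hinc, hstart⟩, hone, hruns⟩ := h
  simp only [factorAt_length_sub_one, if_pos (show 1 < k by omega)] at hinc hstart hone hruns
  rcases eq_or_ne i 0 with rfl | hi0
  · exact .inl fun a ha b hb => eq_of_mem_of_distinctCount_eq_one hone (by simpa) (by simpa)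
  right
  replace hstart := hstart.resolve_left hi0
  have hdrop : w.drop (i - 1) = w[i - 1] :: w[i] :: w.drop (i + 1) := by
    rw [drop_eq_getElem_cons (by omega), Nat.sub_add_cancel (by omega : 1 ≤ i),
      ← drop_eq_getElem_cons hi]
  rw [drop_eq_getElem_cons hi] at hinc hone
  have hdesc : w[i] < w[i - 1] := by
    by_contra! hle
    exact hstart (hdrop ▸ isChain_cons_cons.mpr ⟨hle, hinc⟩)
  have hdecr : weakDecr (w.drop (i - 1)) :=
    hdrop ▸ isChain_cons_cons.mpr ⟨hdesc.le, weakDecr_of_distinctCount_eq_one hone⟩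
  have hnot_incr : ¬ weakIncr (w.drop (i - 1)) := fun hI =>
    (isChain_cons_cons.mp (hdrop ▸ hI)).1.not_gt hdesc
  obtain ⟨i₀, hi₀, hrun, hdecr₀, hstart₀⟩ :=
    exists_maxRunAt_of_weakDecr_drop (by omega) hdecr hnot_incr
  have hlast : ¬ maxRunAt w i (w.length - 1) := fun hr => by
    rcases (maxRunAt_length_sub_one_iff.mp hr).2.2 with h0 | hmax
    · omega
    · exact hmax (.inr hdecr)
  refine ⟨hne, i₀, by omega, ?_, ?_, fun i' j' hr => ?_⟩
  · rw [if_neg Bool.false_ne_true, factorAt_length_sub_one, factorAt_length_sub_one]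
    exact ⟨hdecr₀, hstart₀⟩
  · rw [if_neg (lt_irrefl k)]
    exact (hruns _ _ hrun).resolve_left (by omega)
  · rcases hruns i' j' hr with ⟨rfl, rfl⟩ | hcount
    · exact absurd hr hlast
    · exact .inr hcount

/-- a plateau-(k,1)_↑-rollercoaster is unary or also a
plateau-(k,k)_↓-rollercoaster. -/
theorem stmt3 (w : Word) (k : ℕ) (hk : 3 ≤ k) (hne : w ≠ [])
    (h : IsPRCkh k 1 true w) :
    (∀ a ∈ w, ∀ b ∈ w, a = b) ∨ IsPRCkh k k false w :=
  stmt3_general w k hk h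

end RollerCoaster
end

section
/- In the next-element graph NEG(w) of a word w, distinct paths starting from the first occurrence of their initial letter spell distinct words: if P = (v_{p_1},...,v_{p_j}) and Q = (v_{q_1},...,v_{q_j}) are paths in NEG(w) with p_1 (resp. q_1) the leftmost occurrence in w of the letter w[p_1] (resp. w[q_1]), and w[p_1]w[p_2]...w[p_j] = w[q_1]w[q_2]...w[q_j], then (p_1,...,p_j) = (q_1,...,q_j). -/
namespace RollerCoaster

/-!
From a fixed vertex, two out-edges of `NEG(w)` cannot reach the same letter: the nearer target
would lie strictly inside the window that the minimality condition of the farther edge keeps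
clear of that letter. Two leftmost occurrences of the same letter also coincide, so a path from
a leftmost occurrence is determined, step by step, by the word it spells.
-/

theorem _root_.List.eq_of_isChain_cons_of_map_eq {α β : Type*} {R : α → α → Prop} {f : α → β}
    (hR : ∀ a b c, R a b → R a c → f b = f c → b = c) {a : α} :
    ∀ {ps qs : List α}, (a :: ps).IsChain R → (a :: qs).IsChain R →
      ps.map f = qs.map f → ps = qs
  | [], _, _, _, h => (List.map_eq_nil_iff.mp h.symm).symm
  | _ :: _, [], _, _, h => by simp at h
  | p :: ps, q :: qs, hp, hq, h => by
    rw [List.isChain_cons_cons] at hp hq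
    rw [List.map_cons, List.map_cons, List.cons.injEq] at h
    obtain rfl : p = q := hR a p q hp.1 hq.1 h.1
    rw [eq_of_isChain_cons_of_map_eq hR hp.2 hq.2 h.2]

namespace negEdge

variable {w : Word} {i j : ℕ}

theorem lt (h : negEdge w i j) : i < j := by
  rcases h with ⟨hij, _⟩ | ⟨hij, _⟩ | ⟨hij, _⟩ <;> exact hij

theorem getD_ne_of_lt_of_lt (h : negEdge w i j) {k : ℕ} (hik : i < k) (hkj : k < j) :
    w.getD k 0 ≠ w.getD j 0 := by
  intro hk
  rcases h with ⟨_, _, hlt, hmin⟩ | ⟨_, _, _, hmin⟩ | ⟨_, _, hlt, hmin⟩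
  · exact hmin k hik hkj ⟨hk ▸ hlt.le, hk.le⟩
  · exact hmin k hik hkj hk
  · exact hmin k hik hkj ⟨hk.ge, hk ▸ hlt.le⟩

theorem eq_of_getD_eq {j' : ℕ} (h : negEdge w i j) (h' : negEdge w i j')
    (hw : w.getD j 0 = w.getD j' 0) : j = j' :=
  le_antisymm (not_lt.1 fun hlt => h.getD_ne_of_lt_of_lt h'.lt hlt hw.symm)
    (not_lt.1 fun hlt => h'.getD_ne_of_lt_of_lt h.lt hlt hw)

end negEdge

theorem eq_of_forall_lt_ne {β : Type*} {f : ℕ → β} {p q : ℕ}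
    (hp : ∀ t < p, f t ≠ f p) (hq : ∀ t < q, f t ≠ f q) (hpq : f p = f q) : p = q :=
  le_antisymm (not_lt.1 fun hlt => hp q hlt hpq.symm) (not_lt.1 fun hlt => hq p hlt hpq)

theorem stmt7_general (w : Word) (ps qs : List ℕ)
    (hpne : ps ≠ []) (hqne : qs ≠ [])
    (hp : ps.Chain' (negEdge w)) (hq : qs.Chain' (negEdge w))
    (hpfirst : ∀ t < ps.head hpne, w.getD t 0 ≠ w.getD (ps.head hpne) 0)
    (hqfirst : ∀ t < qs.head hqne, w.getD t 0 ≠ w.getD (qs.head hqne) 0)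
    (hspell : ps.map (fun t => w.getD t 0) = qs.map (fun t => w.getD t 0)) :
    ps = qs := by
  obtain ⟨p, ps, rfl⟩ := List.exists_cons_of_ne_nil hpne
  obtain ⟨q, qs, rfl⟩ := List.exists_cons_of_ne_nil hqne
  rw [List.map_cons, List.map_cons, List.cons.injEq] at hspell
  obtain rfl : p = q := eq_of_forall_lt_ne hpfirst hqfirst hspell.1
  rw [List.eq_of_isChain_cons_of_map_eq (fun _ _ _ => negEdge.eq_of_getD_eq) hp hq hspell.2]

/-- paths in NEG(w) starting at the leftmost occurrence of their
initial letter spell distinct words. -/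
theorem stmt7 (w : Word) (ps qs : List ℕ)
    (hpne : ps ≠ []) (hqne : qs ≠ [])
    (hlen : ps.length = qs.length)
    (hp : ps.Chain' (negEdge w)) (hq : qs.Chain' (negEdge w))
    (hpvalid : ∀ t ∈ ps, t < w.length) (hqvalid : ∀ t ∈ qs, t < w.length)
    (hpfirst : ∀ t < ps.head hpne, w.getD t 0 ≠ w.getD (ps.head hpne) 0)
    (hqfirst : ∀ t < qs.head hqne, w.getD t 0 ≠ w.getD (qs.head hqne) 0)
    (hspell : ps.map (fun t => w.getD t 0) = qs.map (fun t => w.getD t 0)) :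
    ps = qs :=
  stmt7_general w ps qs hpne hqne hp hq hpfirst hqfirst hspell

end RollerCoaster
end

section
/- Let W = {w_1, ..., w_m} be a finite set of words over Σ and let s = s' a be a common plateau-(k,h)_↑-rollercoaster of the prefixes w_1[1..i_1], ..., w_m[1..i_m] ending with letter a = w_1[i_1] = ... = w_m[i_m]. Then there is an equally long common plateau-(k,h)_↑-rollercoaster whose embedding in each w_j uses, as its final position, the last occurrence of a in w_j[1..i_j]. -/
namespace RollerCoaster

/-!
Only the last position of the embedding has to move. Replacing it by the last occurrence of
`a` in `w_j[0..i_j]` keeps the positions increasing (the old last position is itself an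
occurrence of `a`) and spells the same word, so `s` itself is the required rollercoaster.
-/

theorem _root_.List.Pairwise.dropLast_append_of_getLast_le {α : Type*} [Preorder α]
    {l : List α} (hl : l.Pairwise (· < ·)) (hne : l ≠ []) {b : α} (hb : l.getLast hne ≤ b) :
    (l.dropLast ++ [b]).Pairwise (· < ·) :=
  List.pairwise_append.mpr ⟨hl.sublist (List.dropLast_sublist l), List.pairwise_singleton _ b,
    fun _ ha _ hb' => List.mem_singleton.mp hb' ▸ (hl.rel_dropLast_getLast ha).trans_le hb⟩

theorem _root_.List.map_dropLast_append_of_eq_getLast {α β : Type*} {f : α → β} {l : List α}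
    (hne : l ≠ []) {b : α} (hb : f b = f (l.getLast hne)) :
    (l.dropLast ++ [b]).map f = l.map f := by
  conv_rhs => rw [← List.dropLast_append_getLast hne]
  simp [hb]

theorem exists_embedding_ending_at_last_occurrence {α : Type*} (f : ℕ → α) {n : ℕ}
    {idx : List ℕ} {s : List α} (hs : s ≠ []) (hsort : idx.Pairwise (· < ·))
    (hle : ∀ t ∈ idx, t ≤ n) (hmap : idx.map f = s) :
    ∃ (idx' : List ℕ) (hi : idx' ≠ []),
      idx'.Pairwise (· < ·) ∧ (∀ t ∈ idx', t ≤ n) ∧ idx'.map f = s ∧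
      f (idx'.getLast hi) = s.getLast hs ∧
      ∀ t, idx'.getLast hi < t → t ≤ n → f t ≠ s.getLast hs := by
  classical
  subst hmap
  have hi : idx ≠ [] := by rintro rfl; exact hs rfl
  have he : idx.getLast hi ≤ n := hle _ (List.getLast_mem hi)
  have hfe : f (idx.getLast hi) = (idx.map f).getLast hs := (List.getLast_map hs).symm
  let P : ℕ → Prop := fun t => f t = (idx.map f).getLast hs
  let L := Nat.findGreatest P n
  have hfL : f L = (idx.map f).getLast hs := Nat.findGreatest_spec (P := P) he hfe
  refine ⟨idx.dropLast ++ [L], by simp,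
    hsort.dropLast_append_of_getLast_le hi (Nat.le_findGreatest (P := P) he hfe), ?_,
    List.map_dropLast_append_of_eq_getLast hi (hfL.trans hfe.symm), ?_, ?_⟩
  · intro t ht
    rcases List.mem_append.mp ht with ht | ht
    · exact hle t (List.dropLast_subset idx ht)
    · exact List.mem_singleton.mp ht ▸ Nat.findGreatest_le n
  · rwa [List.getLast_append_singleton]
  · rw [List.getLast_append_singleton]
    exact fun t hLt htn => Nat.findGreatest_is_greatest hLt htn

theorem stmt15_general (k h m : ℕ)
    (ws : Fin m → Word) (ix : Fin m → ℕ)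
    (s : Word) (hne : s ≠ [])
    (hrc : IsPRCkh k h true s)
    (E : Fin m → List ℕ)
    (hE : ∀ j, (E j).Pairwise (· < ·) ∧ (∀ t ∈ E j, t ≤ ix j) ∧
      (E j).map (fun t => (ws j).getD t 0) = s) :
    ∃ (s' : Word) (_ : s' ≠ []),
      s'.length = s.length ∧ IsPRCkh k h true s' ∧
      ∀ j, ∃ (idx : List ℕ) (hi : idx ≠ []),
        idx.Pairwise (· < ·) ∧ (∀ t ∈ idx, t ≤ ix j) ∧
        idx.map (fun t => (ws j).getD t 0) = s' ∧
        (ws j).getD (idx.getLast hi) 0 = s.getLast hne ∧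
        ∀ t, idx.getLast hi < t → t ≤ ix j →
          (ws j).getD t 0 ≠ s.getLast hne := by
  refine ⟨s, hne, rfl, hrc, fun j => ?_⟩
  obtain ⟨hsort, hle, hmap⟩ := hE j
  exact exists_embedding_ending_at_last_occurrence _ hne hsort hle hmap

/-- a common plateau-(k,h)_↑-rollercoaster of the prefixes
`w_j[0..i_j]`, ending with the letter `a = w_j[i_j]`, can be replaced by an
equally long one whose embedding in each `w_j` ends at the last occurrence of
`a` in `w_j[0..i_j]`. -/
theorem stmt15 (k h m : ℕ) (hk : 3 ≤ k) (hh : 1 ≤ h) (hhk : h ≤ k)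
    (ws : Fin m → Word) (ix : Fin m → ℕ)
    (hix : ∀ j, ix j < (ws j).length)
    (s : Word) (hne : s ≠ [])
    (hrc : IsPRCkh k h true s)
    (hlastletter : ∀ j, (ws j).getD (ix j) 0 = s.getLast hne)
    (E : Fin m → List ℕ)
    (hE : ∀ j, (E j).Pairwise (· < ·) ∧ (∀ t ∈ E j, t ≤ ix j) ∧
      (E j).map (fun t => (ws j).getD t 0) = s) :
    ∃ (s' : Word) (_ : s' ≠ []),
      s'.length = s.length ∧ IsPRCkh k h true s' ∧
      ∀ j, ∃ (idx : List ℕ) (hi : idx ≠ []),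
        idx.Pairwise (· < ·) ∧ (∀ t ∈ idx, t ≤ ix j) ∧
        idx.map (fun t => (ws j).getD t 0) = s' ∧
        (ws j).getD (idx.getLast hi) 0 = s.getLast hne ∧
        ∀ t, idx.getLast hi < t → t ≤ ix j →
          (ws j).getD t 0 ≠ s.getLast hne :=
  stmt15_general k h m ws ix s hne hrc E hE
end RollerCoaster
end
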